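/- The determinant of the Redheffer matrix R(S) of a finite poset S with least element 0 equals ∑_C (−1)^{|C|} over all chains C (including the empty chain) contained in S \ {0}. -/

import Mathlib

/-!
Let `ζ` be the zeta matrix of `S` and `c x = ∑ (-1)^|C|` over the chains `C` lying strictly
above `x`. Splitting a nonempty chain above `x` at its least element `z` gives
`c x = 1 - ∑_{z > x} c z`, i.e. `ζ c` is the all-ones vector. Since `R(S)` is `ζ` with its
`⊥`-column replaced by the all-ones vector `ζ c`, Cramer's rule gives
`det R(S) = det ζ * c ⊥`, and `det ζ = 1` because `ζ` is unitriangular with respect to any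
linear extension of `S`.
-/

open Matrix Finset
open scoped Classical

variable {S : Type*}

/-- The Redheffer matrix of a finite poset with a least element `⊥`. -/
noncomputable def posetRedheffer [PartialOrder S] [OrderBot S] [Fintype S] : Matrix S S ℤ :=
  fun x y => if x ≤ y ∨ y = ⊥ then 1 else 0

namespace Matrix

variable {n R : Type*} [Fintype n] [DecidableEq n] [CommRing R]

theorem det_updateCol_mulVec (A : Matrix n n R) (j : n) (v : n → R) :
    (A.updateCol j (A *ᵥ v)).det = A.det * v j := by
  rw [← cramer_apply, cramer_eq_adjugate_mulVec, mulVec_mulVec, adjugate_mul, smul_mulVec,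
    one_mulVec, Pi.smul_apply, smul_eq_mul]

theorem det_eq_prod_diag_of_not_le [PartialOrder n] (M : Matrix n n R)
    (hM : ∀ i j, ¬i ≤ j → M i j = 0) : M.det = ∏ i, M i i := by
  let _ : Fintype (LinearExtension n) := ‹Fintype n›
  let e : n ≃ LinearExtension n := Equiv.refl n
  rw [← det_reindex_self e, det_of_isUpperTriangular]
  · exact Fintype.prod_equiv e.symm _ _ fun _ => rfl
  · intro i j hji
    exact hM _ _ fun hij => (toLinearExtension.monotone hij).not_gt hji

end Matrix

section Chains

variable [PartialOrder S]

theorem IsChain.exists_isLeast_of_finset {C : Finset S} (hC : IsChain (· ≤ ·) (C : Set S))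
    (hne : C.Nonempty) : ∃ z, IsLeast (C : Set S) z := by
  obtain ⟨z, hz⟩ := Finset.exists_minimal hne
  exact ⟨z, (hC.symm.directedOn (r := (· ≥ ·))).minimal_iff_isLeast.1 hz⟩

variable [Fintype S]

noncomputable def chainsAbove (x : S) : Finset (Finset S) :=
  {C | IsChain (· ≤ ·) (C : Set S) ∧ ∀ w ∈ C, x < w}

theorem mem_chainsAbove {x : S} {C : Finset S} :
    C ∈ chainsAbove x ↔ IsChain (· ≤ ·) (C : Set S) ∧ ∀ w ∈ C, x < w := by
  simp [chainsAbove]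

theorem empty_mem_chainsAbove (x : S) : ∅ ∈ chainsAbove x := by
  simp [mem_chainsAbove, IsChain.empty]

theorem notMem_of_mem_chainsAbove {x : S} {C : Finset S} (hC : C ∈ chainsAbove x) : x ∉ C :=
  fun hx => lt_irrefl x (mem_chainsAbove.1 hC |>.2 x hx)

theorem insert_mem_chainsAbove {x z : S} {C : Finset S} (hxz : x < z) (hC : C ∈ chainsAbove z) :
    insert z C ∈ chainsAbove x := by
  obtain ⟨hchain, hlt⟩ := mem_chainsAbove.1 hC
  refine mem_chainsAbove.2 ⟨?_, ?_⟩
  · rw [coe_insert]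
    exact hchain.insert fun w hw _ => Or.inl (hlt w hw).le
  · simp only [mem_insert, forall_eq_or_imp]
    exact ⟨hxz, fun w hw => hxz.trans (hlt w hw)⟩

theorem eq_of_insert_eq_insert_of_mem_chainsAbove {z w : S} {C D : Finset S}
    (hC : C ∈ chainsAbove z) (hD : D ∈ chainsAbove w) (h : insert z C = insert w D) :
    z = w ∧ C = D := by
  have hz : z = w ∨ w < z := by
    have : z ∈ insert w D := h ▸ mem_insert_self z C
    exact (mem_insert.1 this).imp_right ((mem_chainsAbove.1 hD).2 z)
  have hw : w = z ∨ z < w := by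
    have : w ∈ insert z C := h ▸ mem_insert_self w D
    exact (mem_insert.1 this).imp_right ((mem_chainsAbove.1 hC).2 w)
  obtain rfl : z = w := hz.resolve_right fun hwz => hw.elim hwz.ne (lt_asymm hwz)
  refine ⟨rfl, ?_⟩
  rw [← erase_insert (notMem_of_mem_chainsAbove hC), h,
    erase_insert (notMem_of_mem_chainsAbove hD)]

theorem exists_insert_eq_of_mem_chainsAbove {x : S} {C : Finset S} (hC : C ∈ chainsAbove x)
    (hne : C ≠ ∅) : ∃ z, x < z ∧ ∃ D ∈ chainsAbove z, insert z D = C := by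
  obtain ⟨hchain, hlt⟩ := mem_chainsAbove.1 hC
  obtain ⟨z, hzC, hzle⟩ := hchain.exists_isLeast_of_finset (nonempty_iff_ne_empty.2 hne)
  refine ⟨z, hlt z hzC, C.erase z, mem_chainsAbove.2 ⟨hchain.mono (by simp), ?_⟩,
    insert_erase hzC⟩
  exact fun w hw => (hzle (mem_of_mem_erase hw)).lt_of_ne (ne_of_mem_erase hw).symm

noncomputable def signedChainSumAbove (x : S) : ℤ :=
  ∑ C ∈ chainsAbove x, (-1) ^ #C

theorem signedChainSumAbove_eq (x : S) :
    signedChainSumAbove x = 1 - ∑ z with x < z, signedChainSumAbove z := by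
  have hnonempty : ∑ C ∈ (chainsAbove x).erase ∅, (-1 : ℤ) ^ #C =
      ∑ p ∈ ({z | x < z} : Finset S).sigma chainsAbove, (-1) ^ (#p.2 + 1) := by
    refine (sum_bij (fun p _ => insert p.1 p.2) ?_ ?_ ?_ ?_).symm
    · intro p hp
      obtain ⟨hxz, hp⟩ := mem_sigma.1 hp
      exact mem_erase.2 ⟨insert_ne_empty _ _, insert_mem_chainsAbove (by simpa using hxz) hp⟩
    · rintro ⟨z, C⟩ hC ⟨w, D⟩ hD h
      obtain ⟨rfl, rfl⟩ := eq_of_insert_eq_insert_of_mem_chainsAbove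
        (mem_sigma.1 hC).2 (mem_sigma.1 hD).2 h
      rfl
    · intro C hC
      obtain ⟨hne, hC⟩ := mem_erase.1 hC
      obtain ⟨z, hxz, D, hD, rfl⟩ := exists_insert_eq_of_mem_chainsAbove hC hne
      exact ⟨⟨z, D⟩, mem_sigma.2 ⟨by simpa using hxz, hD⟩, rfl⟩
    · intro p hp
      rw [card_insert_of_notMem (notMem_of_mem_chainsAbove (mem_sigma.1 hp).2)]
  rw [signedChainSumAbove, ← add_sum_erase _ _ (empty_mem_chainsAbove x), hnonempty,
    ← sum_sigma' _ _ fun _ C => (-1 : ℤ) ^ (#C + 1)]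
  simp [signedChainSumAbove, pow_succ, sum_neg_distrib, sub_eq_add_neg]

end Chains

noncomputable def posetZeta [Preorder S] : Matrix S S ℤ := fun x y => if x ≤ y then 1 else 0

theorem det_posetZeta [PartialOrder S] [Fintype S] : (posetZeta (S := S)).det = 1 := by
  rw [det_eq_prod_diag_of_not_le posetZeta fun i j hij => if_neg hij]
  simp [posetZeta]

theorem posetZeta_mulVec_signedChainSumAbove [PartialOrder S] [Fintype S] :
    posetZeta *ᵥ signedChainSumAbove = fun _ : S => 1 := by
  ext x
  have hIci : ({z | x ≤ z} : Finset S) = insert x ({z | x < z} : Finset S) := by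
    ext z
    simp [le_iff_eq_or_lt, eq_comm]
  rw [mulVec, dotProduct]
  simp only [posetZeta, ite_mul, one_mul, zero_mul]
  rw [← sum_filter, hIci, sum_insert (by simp), signedChainSumAbove_eq x, sub_add_cancel]

theorem posetRedheffer_eq_updateCol [PartialOrder S] [OrderBot S] [Fintype S] :
    posetRedheffer (S := S) = posetZeta.updateCol ⊥ fun _ => 1 := by
  ext x y
  by_cases hy : y = ⊥ <;> simp [posetRedheffer, posetZeta, hy]

/-- The determinant of the Redheffer matrix of a finite poset with least element `⊥`
equals `∑_C (-1)^{|C|}` over all chains `C` (including the empty chain) contained in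
`S \ {⊥}`. -/
theorem posetRedheffer_det_eq_sum_chains [PartialOrder S] [OrderBot S] [Fintype S] :
    (posetRedheffer (S := S)).det =
      ∑ C : Finset S,
        if IsChain (· ≤ ·) (C : Set S) ∧ (⊥ : S) ∉ C then (-1 : ℤ) ^ C.card else 0 := by
  rw [posetRedheffer_eq_updateCol, ← posetZeta_mulVec_signedChainSumAbove, det_updateCol_mulVec,
    det_posetZeta, one_mul, signedChainSumAbove, chainsAbove, sum_filter]
  simp [bot_lt_iff_ne_bot]
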